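/- The structure G is not ultrahomogeneous: there exist finite substructures A and B of G and an isomorphism f : A → B that does not extend to an automorphism of G. -/
import Mathlib

open FirstOrder FirstOrder.Language

/-- The vertex set: all 2-element subsets of `M₀`. -/
def V (M₀ : Type) : Type := {s : Set M₀ // s.ncard = 2}

/-- The adjacency relation: two 2-subsets are adjacent iff they are distinct and intersect
in exactly one point. -/
def ER {M₀ : Type} (u v : V M₀) : Prop :=
  u ≠ v ∧ (u.1 ∩ v.1).ncard = 1

/-- The ternary relation: three pairwise distinct 2-subsets with a common point. -/
def QR {M₀ : Type} (a b c : V M₀) : Prop :=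
  a ≠ b ∧ a ≠ c ∧ b ≠ c ∧ (a.1 ∩ b.1 ∩ c.1).Nonempty

/-- The symbols of the language with one binary relation symbol `E`. -/
inductive GRel : ℕ → Type
  | e : GRel 2

/-- The language with one binary relation symbol `E`. -/
def Lg : FirstOrder.Language := ⟨fun _ => Empty, GRel⟩

/-- The structure `G` on `V M₀`: `E(u,v)` iff `u ≠ v` and `|u ∩ v| = 1`. -/
instance (M₀ : Type) : Lg.Structure (V M₀) where
  funMap := fun f _ => f.elim
  RelMap := fun r x => match r with
    | .e => ER (x 0) (x 1)

/-! ### Auxiliary definitions and lemmas -/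

/-- The vertex given by a pair of distinct points. -/
def pv {M₀ : Type} (a b : M₀) (h : a ≠ b) : V M₀ := ⟨{a, b}, Set.ncard_pair h⟩

lemma mem_pv_left {M₀ : Type} {a b : M₀} (h : a ≠ b) : a ∈ (pv a b h).1 := Or.inl rfl

lemma mem_pv_right {M₀ : Type} {a b : M₀} (h : a ≠ b) : b ∈ (pv a b h).1 := Or.inr rfl

lemma pv_ne_of_right {M₀ : Type} {a b c d : M₀} {hab : a ≠ b} {hcd : c ≠ d}
    (h1 : b ≠ c) (h2 : b ≠ d) : pv a b hab ≠ pv c d hcd := by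
  intro h
  have hb : b ∈ ({c, d} : Set M₀) := by
    have := congrArg Subtype.val h
    simp only [pv] at this
    rw [← this]; exact Or.inr rfl
  rcases hb with h | h <;> [exact h1 h; exact h2 h]

lemma pv_ne_of_left {M₀ : Type} {a b c d : M₀} {hab : a ≠ b} {hcd : c ≠ d}
    (h1 : a ≠ c) (h2 : a ≠ d) : pv a b hab ≠ pv c d hcd := by
  intro h
  have ha : a ∈ ({c, d} : Set M₀) := by
    have := congrArg Subtype.val h
    simp only [pv] at this
    rw [← this]; exact Or.inl rfl
  rcases ha with h | h <;> [exact h1 h; exact h2 h]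

lemma vfin {M₀ : Type} (u : V M₀) : u.1.Finite :=
  Set.finite_of_ncard_ne_zero (by rw [u.2]; norm_num)

/-- Two distinct 2-sets with a common point are adjacent. -/
lemma ER_of_mem {M₀ : Type} {u v : V M₀} (h : u ≠ v) {x : M₀}
    (hu : x ∈ u.1) (hv : x ∈ v.1) : ER u v := by
  refine ⟨h, ?_⟩
  have hinter : u.1 ∩ v.1 = {x} := by
    rw [Set.eq_singleton_iff_unique_mem]
    refine ⟨⟨hu, hv⟩, ?_⟩
    rintro w ⟨hwu, hwv⟩
    by_contra hwx

    have hwx' : x ≠ w := fun h' => hwx h'.symm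
    have h1 : ({x, w} : Set M₀) = u.1 :=
      Set.eq_of_subset_of_ncard_le (by rintro z (rfl | rfl) <;> assumption)
        (by rw [u.2, Set.ncard_pair hwx']) (vfin u)
    have h2 : ({x, w} : Set M₀) = v.1 :=
      Set.eq_of_subset_of_ncard_le (by rintro z (rfl | rfl) <;> assumption)
        (by rw [v.2, Set.ncard_pair hwx']) (vfin v)
    exact h (Subtype.ext (h1 ▸ h2))
  rw [hinter, Set.ncard_singleton]

/-- Parity fact: intersecting a pair in one point means containing exactly one endpoint. -/
lemma xor_of_inter {M₀ : Type} {u : Set M₀} {a b : M₀} (hab : a ≠ b)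
    (h : (u ∩ {a, b}).ncard = 1) : (a ∈ u ↔ ¬ b ∈ u) := by
  by_cases ha : a ∈ u <;> by_cases hb : b ∈ u
  · exfalso
    have : u ∩ {a, b} = {a, b} := Set.inter_eq_right.mpr (by rintro z (rfl | rfl) <;> assumption)
    rw [this, Set.ncard_pair hab] at h; norm_num at h
  · tauto
  · tauto
  · exfalso
    have : u ∩ {a, b} = ∅ := by
      ext z; simp only [Set.mem_inter_iff, Set.mem_insert_iff, Set.mem_singleton_iff,
        Set.mem_empty_iff_false, iff_false, not_and]
      rintro hz (rfl | rfl) <;> [exact ha hz; exact hb hz]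
    rw [this, Set.ncard_empty] at h; exact one_ne_zero h.symm

/-- A triangle `{a,b},{b,c},{a,c}` has no common neighbor. -/
lemma no_common_neighbor {M₀ : Type} {a b c : M₀} (hab : a ≠ b) (hbc : b ≠ c) (hac : a ≠ c)
    (u : V M₀) (h1 : ER u (pv a b hab)) (h2 : ER u (pv b c hbc)) (h3 : ER u (pv a c hac)) :
    False := by
  have x1 := xor_of_inter hab h1.2
  have x2 := xor_of_inter hbc h2.2
  have x3 := xor_of_inter hac h3.2
  tauto

lemma relMap_e {M₀ : Type} (x : Fin 2 → V M₀) :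
    Structure.RelMap (L := Lg) (M := V M₀) GRel.e x ↔ ER (x 0) (x 1) := Iff.rfl

/-- `G` is not ultrahomogeneous: there are finite substructures `A`, `B` of `G` and an
isomorphism `f : A → B` that does not extend to an automorphism of `G`. -/
theorem G_not_ultrahomogeneous (M₀ : Type) [Countable M₀] [Infinite M₀] :
    ∃ (A B : Lg.Substructure (V M₀)) (f : A ≃[Lg] B),
      (A : Set (V M₀)).Finite ∧ (B : Set (V M₀)).Finite ∧
      ∀ g : V M₀ ≃[Lg] V M₀, ¬ ∀ a : A, g ↑a = ↑(f a) := by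
  classical
  obtain ⟨e, he⟩ : ∃ e : ℕ → M₀, Function.Injective e :=
    ⟨(Infinite.natEmbedding M₀ : ℕ ↪ M₀), (Infinite.natEmbedding M₀).injective⟩
  have hne : ∀ i j : ℕ, i ≠ j → e i ≠ e j := fun i j h => fun h' => h (he h')
  set a := e 0; set b := e 1; set c := e 2; set d := e 3; set p := e 4
  have hab : a ≠ b := hne 0 1 (by norm_num)
  have hac : a ≠ c := hne 0 2 (by norm_num)
  have had : a ≠ d := hne 0 3 (by norm_num)
  have hbc : b ≠ c := hne 1 2 (by norm_num)
  have hbd : b ≠ d := hne 1 3 (by norm_num)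
  have hcd : c ≠ d := hne 2 3 (by norm_num)
  have hap : a ≠ p := hne 0 4 (by norm_num)
  have hbp : b ≠ p := hne 1 4 (by norm_num)
  have hcp : c ≠ p := hne 2 4 (by norm_num)
  have hdp : d ≠ p := hne 3 4 (by norm_num)
  set vab : V M₀ := pv a b hab with hvab
  set vac : V M₀ := pv a c hac with hvac
  set vad : V M₀ := pv a d had with hvad
  set vbc : V M₀ := pv b c hbc with hvbc
  set w : V M₀ := pv a p hap with hw
  -- vertex inequalities
  have nAB_AC : vab ≠ vac := pv_ne_of_right hab.symm hbc
  have nAB_AD : vab ≠ vad := pv_ne_of_right hab.symm hbd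
  have nAC_AD : vac ≠ vad := pv_ne_of_right hac.symm hcd
  have nAB_BC : vab ≠ vbc := pv_ne_of_left hab hac
  have nBC_AC : vbc ≠ vac := pv_ne_of_left hab.symm hbc
  -- the substructures
  set SA : Set (V M₀) := {vab, vac, vad} with hSA
  set SB : Set (V M₀) := {vab, vbc, vac} with hSB
  set A : Lg.Substructure (V M₀) := ⟨SA, fun {n} f => f.elim⟩ with hA
  set B : Lg.Substructure (V M₀) := ⟨SB, fun {n} f => f.elim⟩ with hB
  have memA_ab : vab ∈ A := Or.inl rfl
  have memA_ac : vac ∈ A := Or.inr (Or.inl rfl)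
  have memA_ad : vad ∈ A := Or.inr (Or.inr rfl)
  have memB_ab : vab ∈ B := Or.inl rfl
  have memB_bc : vbc ∈ B := Or.inr (Or.inl rfl)
  have memB_ac : vac ∈ B := Or.inr (Or.inr rfl)
  -- the forward map
  set F : A → B := fun x =>
    if x.1 = vab then ⟨vab, memB_ab⟩ else if x.1 = vac then ⟨vbc, memB_bc⟩
      else ⟨vac, memB_ac⟩ with hF
  set Finv : B → A := fun y =>
    if y.1 = vab then ⟨vab, memA_ab⟩ else if y.1 = vbc then ⟨vac, memA_ac⟩
      else ⟨vad, memA_ad⟩ with hFinv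
  have hF_ab : F ⟨vab, memA_ab⟩ = ⟨vab, memB_ab⟩ := by simp [hF]
  have hF_ac : F ⟨vac, memA_ac⟩ = ⟨vbc, memB_bc⟩ := by simp [hF, nAB_AC.symm]
  have hF_ad : F ⟨vad, memA_ad⟩ = ⟨vac, memB_ac⟩ := by
    simp [hF, nAB_AD.symm, nAC_AD.symm]
  have hcasesA : ∀ x : A, x = ⟨vab, memA_ab⟩ ∨ x = ⟨vac, memA_ac⟩ ∨ x = ⟨vad, memA_ad⟩ := by
    rintro ⟨x, hx | hx | hx⟩
    · exact Or.inl (Subtype.ext hx)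
    · exact Or.inr (Or.inl (Subtype.ext hx))
    · exact Or.inr (Or.inr (Subtype.ext hx))
  have hcasesB : ∀ y : B, y = ⟨vab, memB_ab⟩ ∨ y = ⟨vbc, memB_bc⟩ ∨ y = ⟨vac, memB_ac⟩ := by
    rintro ⟨y, hy | hy | hy⟩
    · exact Or.inl (Subtype.ext hy)
    · exact Or.inr (Or.inl (Subtype.ext hy))
    · exact Or.inr (Or.inr (Subtype.ext hy))
  have hFinv_ab : Finv ⟨vab, memB_ab⟩ = ⟨vab, memA_ab⟩ := by simp [hFinv]
  have hFinv_bc : Finv ⟨vbc, memB_bc⟩ = ⟨vac, memA_ac⟩ := by simp [hFinv, nAB_BC.symm]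
  have hFinv_ac : Finv ⟨vac, memB_ac⟩ = ⟨vad, memA_ad⟩ := by
    simp [hFinv, nAB_AC.symm, nBC_AC.symm]
  have hli : Function.LeftInverse Finv F := by
    intro x
    rcases hcasesA x with rfl | rfl | rfl
    · rw [hF_ab, hFinv_ab]
    · rw [hF_ac, hFinv_bc]
    · rw [hF_ad, hFinv_ac]
  have hri : Function.RightInverse Finv F := by
    intro y
    rcases hcasesB y with rfl | rfl | rfl
    · rw [hFinv_ab, hF_ab]
    · rw [hFinv_bc, hF_ac]
    · rw [hFinv_ac, hF_ad]
  -- edges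
  have erAB_AC : ER vab vac := ER_of_mem nAB_AC (mem_pv_left hab) (mem_pv_left hac)
  have erAB_AD : ER vab vad := ER_of_mem nAB_AD (mem_pv_left hab) (mem_pv_left had)
  have erAC_AD : ER vac vad := ER_of_mem nAC_AD (mem_pv_left hac) (mem_pv_left had)
  have erAB_BC : ER vab vbc := ER_of_mem nAB_BC (mem_pv_right hab) (mem_pv_left hbc)
  have erBC_AC : ER vbc vac := ER_of_mem nBC_AC (mem_pv_right hbc) (mem_pv_right hac)
  have ersymm : ∀ u v : V M₀, ER u v → ER v u := by
    rintro u v ⟨h1, h2⟩; exact ⟨h1.symm, by rwa [Set.inter_comm]⟩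
  have erirr : ∀ u : V M₀, ¬ ER u u := fun u h => h.1 rfl
  -- ER on the triangles is just inequality
  have erA : ∀ x y : A, ER (x : V M₀) (y : V M₀) ↔ x ≠ y := by
    intro x y
    constructor
    · intro h hxy; exact (erirr _ (hxy ▸ h))
    · intro hxy
      rcases hcasesA x with rfl | rfl | rfl <;> rcases hcasesA y with rfl | rfl | rfl <;>
        first
          | exact absurd rfl hxy
          | assumption
          | exact ersymm _ _ (by assumption)
  have erB : ∀ x y : B, ER (x : V M₀) (y : V M₀) ↔ x ≠ y := by
    intro x y
    constructor
    · intro h hxy; exact (erirr _ (hxy ▸ h))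
    · intro hxy
      rcases hcasesB x with rfl | rfl | rfl <;> rcases hcasesB y with rfl | rfl | rfl <;>
        first
          | exact absurd rfl hxy
          | assumption
          | exact ersymm _ _ (by assumption)
  have hFinj : Function.Injective F := hli.injective
  -- the isomorphism
  set f : A ≃[Lg] B :=
    { toEquiv := ⟨F, Finv, hli, hri⟩
      map_fun' := fun {n} fn _ => fn.elim
      map_rel' := by
        intro n r x
        cases r
        show ER ((F (x 0) : V M₀)) ((F (x 1) : V M₀)) ↔ ER ((x 0 : V M₀)) ((x 1 : V M₀))
        rw [erA, erB]
        exact ⟨fun h h' => h (h' ▸ rfl), fun h h' => h (hFinj h')⟩ } with hf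
  refine ⟨A, B, f, ?_, ?_, ?_⟩
  · exact (Set.finite_singleton vad).insert vac |>.insert vab
  · exact (Set.finite_singleton vac).insert vbc |>.insert vab
  · intro g hg
    have hmap : ∀ u v : V M₀, ER u v → ER (g u) (g v) := by
      intro u v h
      exact (g.map_rel GRel.e ![u, v]).mpr h
    have hg_ab : g vab = vab := by
      have := hg ⟨vab, memA_ab⟩
      rwa [show f ⟨vab, memA_ab⟩ = ⟨vab, memB_ab⟩ from hF_ab] at this
    have hg_ac : g vac = vbc := by
      have := hg ⟨vac, memA_ac⟩
      rwa [show f ⟨vac, memA_ac⟩ = ⟨vbc, memB_bc⟩ from hF_ac] at this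
    have hg_ad : g vad = vac := by
      have := hg ⟨vad, memA_ad⟩
      rwa [show f ⟨vad, memA_ad⟩ = ⟨vac, memB_ac⟩ from hF_ad] at this
    have e1 : ER (g w) vab := hg_ab ▸ hmap w vab
      (ER_of_mem (pv_ne_of_right hap.symm hbp.symm) (mem_pv_left hap) (mem_pv_left hab))
    have e2 : ER (g w) vbc := hg_ac ▸ hmap w vac
      (ER_of_mem (pv_ne_of_right hap.symm hcp.symm) (mem_pv_left hap) (mem_pv_left hac))
    have e3 : ER (g w) vac := hg_ad ▸ hmap w vad
      (ER_of_mem (pv_ne_of_right hap.symm hdp.symm) (mem_pv_left hap) (mem_pv_left had))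
    exact no_common_neighbor hab hbc hac (g w) e1 e2 e3
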